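/- Let (A, B, C) be a recollement of abelian categories where B and C have enough injective objects, let (T, F) be a tilting torsion pair in B, and suppose i* is exact. Then (i*(T), i^!(F)) is a tilting torsion pair in A; in particular i*(T) contains every injective object of A. -/

import Mathlib

open CategoryTheory Limits

universe u₁ u₂ u₃ v₁ v₂ v₃

/-- A recollement of abelian categories `(𝒜, ℬ, 𝒞)`. -/
structure Recollement (𝒜 : Type u₁) (ℬ : Type u₂) (𝒞 : Type u₃)
    [Category.{v₁} 𝒜] [Category.{v₂} ℬ] [Category.{v₃} 𝒞]
    [Abelian 𝒜] [Abelian ℬ] [Abelian 𝒞] where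
  /-- `i^* : ℬ → 𝒜` -/
  iStar : ℬ ⥤ 𝒜
  /-- `i_* : 𝒜 → ℬ` -/
  iIns : 𝒜 ⥤ ℬ
  /-- `i^! : ℬ → 𝒜` -/
  iShriek : ℬ ⥤ 𝒜
  /-- `j_! : 𝒞 → ℬ` -/
  jShriek : 𝒞 ⥤ ℬ
  /-- `j^* : ℬ → 𝒞` -/
  jStar : ℬ ⥤ 𝒞
  /-- `j_* : 𝒞 → ℬ` -/
  jIns : 𝒞 ⥤ ℬ
  iStar_additive : iStar.Additive
  iIns_additive : iIns.Additive
  iShriek_additive : iShriek.Additive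
  jShriek_additive : jShriek.Additive
  jStar_additive : jStar.Additive
  jIns_additive : jIns.Additive
  /-- the adjoint pair `(i^*, i_*)` -/
  adj₁ : iStar ⊣ iIns
  /-- the adjoint pair `(i_*, i^!)` -/
  adj₂ : iIns ⊣ iShriek
  /-- the adjoint pair `(j_!, j^*)` -/
  adj₃ : jShriek ⊣ jStar
  /-- the adjoint pair `(j^*, j_*)` -/
  adj₄ : jStar ⊣ jIns
  iIns_full : iIns.Full
  iIns_faithful : iIns.Faithful
  jShriek_full : jShriek.Full
  jShriek_faithful : jShriek.Faithful
  jIns_full : jIns.Full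
  jIns_faithful : jIns.Faithful
  /-- `Im i_* = Ker j^*` -/
  essImage_iIns_eq_ker_jStar : ∀ b : ℬ, iIns.essImage b ↔ IsZero (jStar.obj b)

/-- A pair of full subcategories (given as sets of objects, closed under
isomorphisms) `(T, F)` of an abelian category is a torsion pair if all
morphisms from `T` to `F` vanish and every object fits in a short exact
sequence with first term in `T` and third term in `F`. -/
structure IsTorsionPair {𝒜 : Type u₁} [Category.{v₁} 𝒜] [Abelian 𝒜]
    (T F : Set 𝒜) : Prop where
  mem_T_of_iso : ∀ {X Y : 𝒜}, (X ≅ Y) → X ∈ T → Y ∈ T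
  mem_F_of_iso : ∀ {X Y : 𝒜}, (X ≅ Y) → X ∈ F → Y ∈ F
  hom_eq_zero : ∀ {X Y : 𝒜}, X ∈ T → Y ∈ F → ∀ f : X ⟶ Y, f = 0
  exists_ses : ∀ M : 𝒜, ∃ (X Y : 𝒜) (f : X ⟶ M) (g : M ⟶ Y) (w : f ≫ g = 0),
    X ∈ T ∧ Y ∈ F ∧ (ShortComplex.mk f g w).ShortExact

/-!
The unit `B ⟶ i_* i^* B` is an epimorphism, since its cokernel is killed by both `i^*` and `j^*`.
Hence a map `i^* t ⟶ i^! f`, i.e. a map `i_* i^* t ⟶ f`, vanishes for `t ∈ T`, `f ∈ F`.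
Applying the exact functor `i^*` to the torsion sequence of `i_* M` gives one for
`M ≅ i^* i_* M`; its torsion-free end `Y` is a quotient of `i_* M`, so it lies in the image of
`i_*`, where `i^! Y ≅ i^* Y`. Likewise an embedding `i_* M ↪ X` with `X ∈ T` gives `M ↪ i^* X`,
and an injective object, a retract and hence a quotient of such an `i^* X`, is torsion.
-/

namespace CategoryTheory.Functor

variable {C D : Type*} [Category C] [Category D]

def essImageSet (G : C ⥤ D) (S : Set C) : Set D :=
  {a | ∃ b ∈ S, Nonempty (G.obj b ≅ a)}

lemma obj_mem_essImageSet (G : C ⥤ D) {S : Set C} {b : C} (hb : b ∈ S) :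
    G.obj b ∈ G.essImageSet S :=
  ⟨b, hb, ⟨Iso.refl _⟩⟩

lemma mem_essImageSet_of_iso (G : C ⥤ D) {S : Set C} {X Y : D} (e : X ≅ Y)
    (hX : X ∈ G.essImageSet S) : Y ∈ G.essImageSet S :=
  let ⟨b, hb, ⟨e'⟩⟩ := hX
  ⟨b, hb, ⟨e' ≪≫ e⟩⟩

end CategoryTheory.Functor

namespace IsTorsionPair

variable {𝒜 : Type u₁} [Category.{v₁} 𝒜] [Abelian 𝒜] {T F : Set 𝒜}

lemma mem_T_of_epi (h : IsTorsionPair T F) {X Q : 𝒜} (hX : X ∈ T) (p : X ⟶ Q) [Epi p] :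
    Q ∈ T := by
  obtain ⟨t, f, x, y, w, ht, hf, hse⟩ := h.exists_ses Q
  have hy : y = 0 := by rw [← cancel_epi p, h.hom_eq_zero hX hf (p ≫ y), comp_zero]
  have : Epi x := hse.exact.epi_f hy
  have : Mono x := hse.mono_f
  have : IsIso x := isIso_of_mono_of_epi x
  exact h.mem_T_of_iso (asIso x) ht

lemma mem_T_of_injective (h : IsTorsionPair T F)
    (htilt : ∀ M : 𝒜, ∃ X ∈ T, ∃ f : M ⟶ X, Mono f) (I : 𝒜) [Injective I] : I ∈ T := by
  obtain ⟨X, hX, m, hm⟩ := htilt I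
  have : Epi (Injective.factorThru (𝟙 I) m) := epi_of_epi_fac (Injective.comp_factorThru (𝟙 I) m)
  exact h.mem_T_of_epi hX (Injective.factorThru (𝟙 I) m)

end IsTorsionPair

namespace Recollement

variable {𝒜 : Type u₁} {ℬ : Type u₂} {𝒞 : Type u₃}
    [Category.{v₁} 𝒜] [Category.{v₂} ℬ] [Category.{v₃} 𝒞]
    [Abelian 𝒜] [Abelian ℬ] [Abelian 𝒞] (R : Recollement 𝒜 ℬ 𝒞)

instance : R.iIns.Full := R.iIns_full
instance : R.iIns.Faithful := R.iIns_faithful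
instance : R.iStar.Additive := R.iStar_additive
instance : R.iIns.Additive := R.iIns_additive
instance : R.iShriek.Additive := R.iShriek_additive
instance : R.jStar.Additive := R.jStar_additive
instance : R.iStar.IsLeftAdjoint := R.adj₁.isLeftAdjoint
instance : R.jStar.IsLeftAdjoint := R.adj₄.isLeftAdjoint

lemma isZero_jStar_obj_iIns_obj (a : 𝒜) : IsZero (R.jStar.obj (R.iIns.obj a)) :=
  (R.essImage_iIns_eq_ker_jStar _).1 (R.iIns.obj_mem_essImage a)

lemma isZero_of_isZero_iStar_obj_of_isZero_jStar_obj {B : ℬ} (hi : IsZero (R.iStar.obj B))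
    (hj : IsZero (R.jStar.obj B)) : IsZero B := by
  obtain ⟨a, ⟨e⟩⟩ := (R.essImage_iIns_eq_ker_jStar B).2 hj
  have ha : IsZero a :=
    (hi.of_iso (R.iStar.mapIso e)).of_iso (asIso (R.adj₁.counit.app a)).symm
  exact (R.iIns.map_isZero ha).of_iso e.symm

instance epi_adj₁_unit_app (B : ℬ) : Epi (R.adj₁.unit.app B) := by
  apply Preadditive.epi_of_isZero_cokernel
  apply R.isZero_of_isZero_iStar_obj_of_isZero_jStar_obj
  · -- `i^*` preserves cokernels, and `i^* η` is invertible by the triangle identity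
    exact (isZero_cokernel_of_epi _).of_iso (PreservesCokernel.iso R.iStar _)
  · exact IsZero.of_epi (R.jStar.map (cokernel.π _)) (R.isZero_jStar_obj_iIns_obj _)

lemma nonempty_iShriek_obj_iso_iStar_obj {Y : ℬ} (hY : IsZero (R.jStar.obj Y)) :
    Nonempty (R.iShriek.obj Y ≅ R.iStar.obj Y) := by
  obtain ⟨a, ⟨e⟩⟩ := (R.essImage_iIns_eq_ker_jStar Y).2 hY
  exact ⟨R.iShriek.mapIso e.symm ≪≫ (asIso (R.adj₂.unit.app a)).symm ≪≫
    (asIso (R.adj₁.counit.app a)).symm ≪≫ R.iStar.mapIso e⟩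

lemma iStar_obj_hom_iShriek_obj_eq_zero {t f : ℬ} (h : ∀ g : t ⟶ f, g = 0)
    (ψ : R.iStar.obj t ⟶ R.iShriek.obj f) : ψ = 0 := by
  have hψ : (R.adj₂.homEquiv _ _).symm ψ = 0 := by
    rw [← cancel_epi (R.adj₁.unit.app t), h (R.adj₁.unit.app t ≫ _), comp_zero]
  simpa [Adjunction.homEquiv_unit] using congrArg (R.adj₂.homEquiv _ _) hψ

lemma isTorsionPair_essImageSet [PreservesFiniteLimits R.iStar]
    [PreservesFiniteColimits R.iStar] {T F : Set ℬ} (htf : IsTorsionPair T F) :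
    IsTorsionPair (R.iStar.essImageSet T) (R.iShriek.essImageSet F) where
  mem_T_of_iso := R.iStar.mem_essImageSet_of_iso
  mem_F_of_iso := R.iShriek.mem_essImageSet_of_iso
  hom_eq_zero := by
    rintro X Y ⟨t, ht, ⟨e₁⟩⟩ ⟨f, hf, ⟨e₂⟩⟩ φ
    have hψ := R.iStar_obj_hom_iShriek_obj_eq_zero (htf.hom_eq_zero ht hf) (e₁.hom ≫ φ ≫ e₂.inv)
    simpa using e₁.inv ≫= hψ =≫ e₂.hom
  exists_ses M := by
    obtain ⟨X, Y, x, y, w, hX, hY, hse⟩ := htf.exists_ses (R.iIns.obj M)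
    have : Epi y := hse.epi_g
    have hY' : IsZero (R.jStar.obj Y) :=
      IsZero.of_epi (R.jStar.map y) (R.isZero_jStar_obj_iIns_obj M)
    obtain ⟨e⟩ := R.nonempty_iShriek_obj_iso_iStar_obj hY'
    let ε := asIso (R.adj₁.counit.app M)
    refine ⟨R.iStar.obj X, R.iStar.obj Y, R.iStar.map x ≫ ε.hom, ε.inv ≫ R.iStar.map y,
      by simp [← Functor.map_comp, w], R.iStar.obj_mem_essImageSet hX, ⟨Y, hY, ⟨e⟩⟩, ?_⟩
    refine ShortComplex.shortExact_of_iso ?_ (hse.map_of_exact R.iStar)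
    exact ShortComplex.isoMk (Iso.refl _) ε (Iso.refl _) (Category.id_comp _)
      ((ε.hom_inv_id_assoc _).trans (Category.comp_id _).symm)

lemma exists_mono_to_essImageSet_iStar [PreservesFiniteLimits R.iStar] {T : Set ℬ}
    (htilt : ∀ M : ℬ, ∃ X ∈ T, ∃ f : M ⟶ X, Mono f) (M : 𝒜) :
    ∃ X ∈ R.iStar.essImageSet T, ∃ f : M ⟶ X, Mono f := by
  obtain ⟨X, hX, m, hm⟩ := htilt (R.iIns.obj M)
  exact ⟨R.iStar.obj X, R.iStar.obj_mem_essImageSet hX,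
    inv (R.adj₁.counit.app M) ≫ R.iStar.map m, inferInstance⟩

end Recollement

theorem stmt15_general (𝒜 : Type u₁) (ℬ : Type u₂) (𝒞 : Type u₃)
    [Category.{v₁} 𝒜] [Category.{v₂} ℬ] [Category.{v₃} 𝒞]
    [Abelian 𝒜] [Abelian ℬ] [Abelian 𝒞]
    (R : Recollement 𝒜 ℬ 𝒞)
    (T F : Set ℬ) (htf : IsTorsionPair T F)
    (htilt : ∀ M : ℬ, ∃ X ∈ T, ∃ f : M ⟶ X, Mono f)
    (h₁ : PreservesFiniteLimits R.iStar)
    (h₂ : PreservesFiniteColimits R.iStar) :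
    IsTorsionPair {a : 𝒜 | ∃ b ∈ T, Nonempty (R.iStar.obj b ≅ a)}
        {a : 𝒜 | ∃ b ∈ F, Nonempty (R.iShriek.obj b ≅ a)} ∧
    (∀ M : 𝒜, ∃ X ∈ {a : 𝒜 | ∃ b ∈ T, Nonempty (R.iStar.obj b ≅ a)},
      ∃ f : M ⟶ X, Mono f) ∧
    (∀ I : 𝒜, Injective I → I ∈ {a : 𝒜 | ∃ b ∈ T, Nonempty (R.iStar.obj b ≅ a)}) := by
  have hpair := R.isTorsionPair_essImageSet htf
  have htilt' := R.exists_mono_to_essImageSet_iStar htilt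
  exact ⟨hpair, htilt', fun I _ => hpair.mem_T_of_injective htilt' I⟩

/-- Let `(𝒜, ℬ, 𝒞)` be a recollement with `ℬ` and `𝒞` having enough
injectives, let `(T, F)` be a tilting torsion pair in `ℬ`, and suppose `i^*`
is exact. Then `(i^*(T), i^!(F))` (essential images) is a tilting torsion pair
in `𝒜`; in particular `i^*(T)` contains every injective object of `𝒜`. -/
theorem stmt15 (𝒜 : Type u₁) (ℬ : Type u₂) (𝒞 : Type u₃)
    [Category.{v₁} 𝒜] [Category.{v₂} ℬ] [Category.{v₃} 𝒞]
    [Abelian 𝒜] [Abelian ℬ] [Abelian 𝒞]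
    [EnoughInjectives ℬ] [EnoughInjectives 𝒞] (R : Recollement 𝒜 ℬ 𝒞)
    (T F : Set ℬ) (htf : IsTorsionPair T F)
    (htilt : ∀ M : ℬ, ∃ X ∈ T, ∃ f : M ⟶ X, Mono f)
    (h₁ : PreservesFiniteLimits R.iStar)
    (h₂ : PreservesFiniteColimits R.iStar) :
    IsTorsionPair {a : 𝒜 | ∃ b ∈ T, Nonempty (R.iStar.obj b ≅ a)}
        {a : 𝒜 | ∃ b ∈ F, Nonempty (R.iShriek.obj b ≅ a)} ∧
    (∀ M : 𝒜, ∃ X ∈ {a : 𝒜 | ∃ b ∈ T, Nonempty (R.iStar.obj b ≅ a)},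
      ∃ f : M ⟶ X, Mono f) ∧
    (∀ I : 𝒜, Injective I → I ∈ {a : 𝒜 | ∃ b ∈ T, Nonempty (R.iStar.obj b ≅ a)}) :=
  stmt15_general 𝒜 ℬ 𝒞 R T F htf htilt h₁ h₂
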